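/- arXiv:2307.03027 — 6 statements merged into one kernel-verified Lean document; each statement's English description precedes it below -/
import Mathlib

section
/- Let K ≥ 1 be a natural number, λ ∈ (0, 1], ε ∈ (0, 1), and let w : Fin M → ℝ satisfy λ ≤ w j ≤ 1 for all j. Let b ∈ ℕ with b ≤ M and b > (4/λ) · log(1/ε) + (2K − 2)/λ, and set μ_b := ∑_{j < b} w j. Then μ_b > 2(K − 1) and exp(−(μ_b − K + 1)² / (2 μ_b)) < ε. -/
/-! With every weight at least `λ`, the first `b` weights have total mass `μ_b ≥ λ b`, so the
hypothesis on `b` gives `μ_b > 4 log(1/ε) + 2(K - 1)`. Writing `t = μ_b - (K - 1)` and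
`L = log(1/ε)`, this reads `t > 4L + (K - 1)`, whence `t² > 4Lt ≥ 2L(t + K - 1) = 2Lμ_b`,
which is the Chernoff exponent exceeding `L`. -/

open Finset Real

lemma mul_le_sum_filter_val_lt {M b : ℕ} (hbM : b ≤ M) {lam : ℝ} {w : Fin M → ℝ}
    (hw : ∀ j, lam ≤ w j) : lam * b ≤ ∑ j ∈ univ.filter (fun j : Fin M => (j : ℕ) < b), w j := by
  have h := card_nsmul_le_sum (univ.filter (fun j : Fin M => (j : ℕ) < b)) w lam
    fun j _ => hw j
  rwa [Fin.card_filter_val_lt, min_eq_right hbM, nsmul_eq_mul, mul_comm] at h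

lemma two_mul_mul_lt_sq_sub {μ c L : ℝ} (hc : 0 ≤ c) (hL : 0 ≤ L) (hμ : 4 * L + 2 * c < μ) :
    2 * μ * L < (μ - c) ^ 2 := by
  have ht : 4 * L + c < μ - c := by linarith
  have ht0 : 0 < μ - c := by linarith
  calc 2 * μ * L = 2 * L * (μ - c) + 2 * L * c := by ring
    _ ≤ 4 * L * (μ - c) := by linarith [mul_le_mul_of_nonneg_left (by linarith : c ≤ μ - c) hL]
    _ < (μ - c) * (μ - c) := mul_lt_mul_of_pos_right (by linarith) ht0
    _ = (μ - c) ^ 2 := by ring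

lemma exp_neg_sq_sub_div_lt {μ c ε : ℝ} (hc : 0 ≤ c) (hε0 : 0 < ε) (hε1 : ε ≤ 1)
    (hμ : 4 * log (1 / ε) + 2 * c < μ) : exp (-(μ - c) ^ 2 / (2 * μ)) < ε := by
  have hL : 0 ≤ log (1 / ε) := log_nonneg (one_le_one_div hε0 hε1)
  have hlog : log ε = -log (1 / ε) := by rw [one_div, log_inv, neg_neg]
  rw [← exp_log hε0, exp_lt_exp, hlog, neg_div, neg_lt_neg_iff, lt_div_iff₀ (by linarith)]
  linarith [two_mul_mul_lt_sq_sub hc hL hμ]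

theorem boundary_point_bound_general (M K : ℕ) (hK : 1 ≤ K) (lam ε : ℝ)
    (hlam0 : 0 < lam) (hε0 : 0 < ε) (hε1 : ε < 1)
    (w : Fin M → ℝ) (hw : ∀ j, lam ≤ w j ∧ w j ≤ 1)
    (b : ℕ) (hbM : b ≤ M)
    (hb : (4 / lam) * Real.log (1 / ε) + (2 * (K : ℝ) - 2) / lam < (b : ℝ)) :
    2 * ((K : ℝ) - 1) < (∑ j ∈ Finset.univ.filter (fun j : Fin M => (j : ℕ) < b), w j)
    ∧ Real.exp (-((∑ j ∈ Finset.univ.filter (fun j : Fin M => (j : ℕ) < b), w j)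
          - (K : ℝ) + 1) ^ 2
        / (2 * ∑ j ∈ Finset.univ.filter (fun j : Fin M => (j : ℕ) < b), w j)) < ε := by
  set μ := ∑ j ∈ univ.filter (fun j : Fin M => (j : ℕ) < b), w j
  have hc : (0 : ℝ) ≤ K - 1 := by
    have : (1 : ℝ) ≤ K := by exact_mod_cast hK
    linarith
  have hL : 0 ≤ log (1 / ε) := log_nonneg (one_le_one_div hε0 hε1.le)
  have hlamb : 4 * log (1 / ε) + 2 * ((K : ℝ) - 1) < lam * b := by
    rw [div_mul_eq_mul_div, ← add_div, div_lt_iff₀ hlam0] at hb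
    linarith
  have hμ : 4 * log (1 / ε) + 2 * ((K : ℝ) - 1) < μ :=
    hlamb.trans_le (mul_le_sum_filter_val_lt hbM fun j => (hw j).1)
  refine ⟨by linarith, ?_⟩
  rw [show μ - K + 1 = μ - (K - 1) by ring]
  exact exp_neg_sq_sub_div_lt hc hε0 hε1.le hμ

/-- If every weight is at least `λ`, then any boundary index
`b > (4/λ)·log(1/ε) + (2K-2)/λ` satisfies `μ_b > 2(K-1)` and the Chernoff bound
`exp(-(μ_b - K + 1)² / (2 μ_b)) < ε`, where `μ_b = ∑_{j < b} w j`. -/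
theorem boundary_point_bound (M K : ℕ) (hK : 1 ≤ K) (lam ε : ℝ)
    (hlam0 : 0 < lam) (hlam1 : lam ≤ 1) (hε0 : 0 < ε) (hε1 : ε < 1)
    (w : Fin M → ℝ) (hw : ∀ j, lam ≤ w j ∧ w j ≤ 1)
    (b : ℕ) (hbM : b ≤ M)
    (hb : (4 / lam) * Real.log (1 / ε) + (2 * (K : ℝ) - 2) / lam < (b : ℝ)) :
    2 * ((K : ℝ) - 1) < (∑ j ∈ Finset.univ.filter (fun j : Fin M => (j : ℕ) < b), w j)
    ∧ Real.exp (-((∑ j ∈ Finset.univ.filter (fun j : Fin M => (j : ℕ) < b), w j)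
          - (K : ℝ) + 1) ^ 2
        / (2 * ∑ j ∈ Finset.univ.filter (fun j : Fin M => (j : ℕ) < b), w j)) < ε :=
  boundary_point_bound_general M K hK lam ε hlam0 hε0 hε1 w hw b hbM hb
end

section
/- Let M, K ∈ ℕ with K ≥ 2, λ ∈ (0, 1], ε ∈ (0, 1). Let w : Fin M → ℝ satisfy λ ≤ w j ≤ 1 for all j, let v : Fin M → ℝ satisfy 0 ≤ v j ≤ 1 for all j, and let U(S) := (1/K) · ∑_{j ∈ top_K(S)} v j. Fix i, b ∈ Fin M with i ≤ b and (b : ℕ) + 1 > (4/λ) · log(1/ε) + (2K − 2)/λ. Define G := ∑_{S ⊆ (Fin M) \ {i}} (U(S ∪ {i}) − U(S)) · (∏_{j ∈ S} w j) · (∏_{j ∉ S ∪ {i}} (1 − w j)) and Ĝ := ∑_{S ⊆ {j : j ≤ b} \ {i}} (U(S ∪ {i}) − U(S)) · (∏_{j ∈ S} w j) · (∏_{j ≤ b, j ∉ S ∪ {i}} (1 − w j)). Then |Ĝ − G| ≤ ε, i.e., the gradient computed on the truncated corpus consisting of the b highest-ranked points is an ε-approximation of the true gradient. -/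
/-- `topK K S` is the set of the `min(K, |S|)` smallest indices of `S`. -/
def topK {M : ℕ} (K : ℕ) (S : Finset (Fin M)) : Finset (Fin M) :=
  ((S.sort (· ≤ ·)).take K).toFinset



private lemma mem_take_sorted_iff {α : Type*} [LinearOrder α] :
    ∀ (l : List α), l.Pairwise (· < ·) → ∀ (K : ℕ) (x : α),
      x ∈ l.take K ↔ x ∈ l ∧ l.countP (fun y => decide (y < x)) < K := by
  intro l
  induction l with
  | nil => intro _ K x; simp
  | cons a t ih =>
    intro hl K x
    obtain ⟨ha, ht⟩ := List.pairwise_cons.mp hl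
    cases K with
    | zero => simp
    | succ k =>
      rw [List.take_succ_cons]
      simp only [List.mem_cons, List.countP_cons]
      by_cases hxa : x = a
      · subst hxa
        have h0 : t.countP (fun y => decide (y < x)) = 0 := by
          rw [List.countP_eq_zero]
          intro y hy
          simpa using not_lt_of_gt (ha y hy)
        simp [h0]
      · by_cases hxt : x ∈ t
        · have hax : a < x := ha x hxt
          have hone : (if decide (a < x) = true then 1 else 0) = 1 := by simp [hax]
          simp only [ih ht k x, hxa, false_or, hone]
          constructor
          · rintro ⟨h1, h2⟩; exact ⟨h1, by omega⟩
          · rintro ⟨h1, h2⟩; exact ⟨h1, by omega⟩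
        · have h1 : x ∉ t.take k := fun h => hxt (List.mem_of_mem_take h)
          simp [hxa, hxt, h1]

private lemma card_filter_eq_countP_sort {α : Type*} [LinearOrder α] (S : Finset α)
    (p : α → Prop) [DecidablePred p] :
    (S.filter p).card = (S.sort (· ≤ ·)).countP (fun y => decide (p y)) := by
  rw [(Finset.sort_perm_toList S (· ≤ ·)).countP_eq]
  rw [List.countP_eq_length_filter]
  have hnd : (S.toList.filter (fun y => decide (p y))).Nodup := S.nodup_toList.filter _
  rw [← List.toFinset_card_of_nodup hnd]
  congr 1
  ext y
  simp [List.mem_filter]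

lemma mem_topK {M K : ℕ} {S : Finset (Fin M)} {x : Fin M} :
    x ∈ topK K S ↔ x ∈ S ∧ (S.filter (· < x)).card < K := by
  unfold topK
  rw [List.mem_toFinset, mem_take_sorted_iff _ (Finset.sortedLT_sort S).pairwise K x,
    Finset.mem_sort, card_filter_eq_countP_sort]


section TopKLemmas

variable {M K : ℕ} {S : Finset (Fin M)} {i x : Fin M}

lemma topK_subset : topK K S ⊆ S := fun x hx => (mem_topK.mp hx).1

private lemma filter_lt_insert_card (hi : i ∉ S) (x : Fin M) :
    ((insert i S).filter (· < x)).card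
      = (S.filter (· < x)).card + if i < x then 1 else 0 := by
  rw [Finset.filter_insert]
  split_ifs with h
  · rw [Finset.card_insert_of_notMem (fun hc => hi (Finset.mem_filter.mp hc).1)]
  · simp

lemma topK_insert_of_ge (hi : i ∉ S) (hn : K ≤ (S.filter (· < i)).card) :
    topK K (insert i S) = topK K S := by
  ext x
  rw [mem_topK, mem_topK]
  constructor
  · rintro ⟨hx1, hx2⟩
    have hxi : x ≠ i := by
      rintro rfl
      rw [filter_lt_insert_card hi, if_neg (lt_irrefl x)] at hx2
      omega
    have hxS : x ∈ S := by
      rcases Finset.mem_insert.mp hx1 with h | h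
      · exact absurd h hxi
      · exact h
    refine ⟨hxS, ?_⟩
    have hsub : S.filter (· < x) ⊆ (insert i S).filter (· < x) :=
      Finset.filter_subset_filter _ (Finset.subset_insert i S)
    have := Finset.card_le_card hsub
    omega
  · rintro ⟨hx1, hx2⟩
    have hix : ¬ i < x := by
      intro hix
      have hsub : S.filter (· < i) ⊆ S.filter (· < x) := by
        intro y hy
        rw [Finset.mem_filter] at hy ⊢
        exact ⟨hy.1, hy.2.trans hix⟩
      have := Finset.card_le_card hsub
      omega
    rw [filter_lt_insert_card hi, if_neg hix]
    exact ⟨Finset.mem_insert_of_mem hx1, by omega⟩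

end TopKLemmas

section TopKLemmas2

variable {M K : ℕ} {S : Finset (Fin M)} {i : Fin M}

lemma mem_topK_insert (hi : i ∉ S) (hn : (S.filter (· < i)).card < K) :
    i ∈ topK K (insert i S) := by
  rw [mem_topK, filter_lt_insert_card hi, if_neg (lt_irrefl i)]
  exact ⟨Finset.mem_insert_self i S, by omega⟩

lemma topK_insert_sdiff_subset (hi : i ∉ S) :
    topK K (insert i S) \ {i} ⊆ topK K S := by
  intro x hx
  rw [Finset.mem_sdiff, Finset.mem_singleton] at hx
  obtain ⟨hx1, hxi⟩ := hx
  rw [mem_topK] at hx1 ⊢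
  obtain ⟨hm, hc⟩ := hx1
  refine ⟨(Finset.mem_insert.mp hm).resolve_left hxi, ?_⟩
  have hsub : S.filter (· < x) ⊆ (insert i S).filter (· < x) :=
    Finset.filter_subset_filter _ (Finset.subset_insert i S)
  have := Finset.card_le_card hsub
  omega

lemma card_topK_sdiff_le_one (hi : i ∉ S) :
    (topK K S \ topK K (insert i S)).card ≤ 1 := by
  rw [Finset.card_le_one]
  have key : ∀ a ∈ topK K S \ topK K (insert i S),
      (S.filter (· < a)).card + 1 = K ∧ a ∈ S := by
    intro a ha
    rw [Finset.mem_sdiff, mem_topK, mem_topK] at ha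
    obtain ⟨⟨haS, hca⟩, hna⟩ := ha
    rw [not_and, filter_lt_insert_card hi] at hna
    have := hna (Finset.mem_insert_of_mem haS)
    constructor
    · split_ifs at this <;> omega
    · exact haS
  intro a ha b hb
  by_contra hne
  rcases lt_or_gt_of_ne hne with hlt | hlt
  · obtain ⟨hea, haS⟩ := key a ha
    obtain ⟨heb, hbS⟩ := key b hb
    have hsub : insert a (S.filter (· < a)) ⊆ S.filter (· < b) := by
      intro y hy
      rcases Finset.mem_insert.mp hy with rfl | hy'
      · exact Finset.mem_filter.mpr ⟨haS, hlt⟩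
      · rw [Finset.mem_filter] at hy' ⊢
        exact ⟨hy'.1, hy'.2.trans hlt⟩
    have h1 := Finset.card_le_card hsub
    have hnm : a ∉ S.filter (· < a) := fun hc => absurd (Finset.mem_filter.mp hc).2 (lt_irrefl a)
    rw [Finset.card_insert_of_notMem hnm] at h1
    omega
  · obtain ⟨hea, haS⟩ := key a ha
    obtain ⟨heb, hbS⟩ := key b hb
    have hsub : insert b (S.filter (· < b)) ⊆ S.filter (· < a) := by
      intro y hy
      rcases Finset.mem_insert.mp hy with rfl | hy'
      · exact Finset.mem_filter.mpr ⟨hbS, hlt⟩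
      · rw [Finset.mem_filter] at hy' ⊢
        exact ⟨hy'.1, hy'.2.trans hlt⟩
    have h1 := Finset.card_le_card hsub
    have hnm : b ∉ S.filter (· < b) := fun hc => absurd (Finset.mem_filter.mp hc).2 (lt_irrefl b)
    rw [Finset.card_insert_of_notMem hnm] at h1
    omega

lemma sum_topK_insert_sub (v : Fin M → ℝ) (hi : i ∉ S) (hn : (S.filter (· < i)).card < K) :
    (∑ j ∈ topK K (insert i S), v j) - ∑ j ∈ topK K S, v j
      = v i - ∑ j ∈ topK K S \ topK K (insert i S), v j := by
  set X := topK K (insert i S) with hX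
  set Y := topK K S with hY
  have hiX : i ∈ X := mem_topK_insert hi hn
  have hiY : i ∉ Y := fun h => hi (topK_subset h)
  have hXY : X \ {i} ⊆ Y := topK_insert_sdiff_subset hi
  have hsplitX : ∑ j ∈ X, v j = v i + ∑ j ∈ X \ {i}, v j := by
    rw [← Finset.erase_eq, ← Finset.add_sum_erase X v hiX]
  have hYX : Y ∩ X = X \ {i} := by
    ext y
    rw [Finset.mem_inter, Finset.mem_sdiff, Finset.mem_singleton]
    constructor
    · rintro ⟨hy1, hy2⟩
      exact ⟨hy2, fun h => hiY (h ▸ hy1)⟩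
    · intro hy
      exact ⟨hXY (Finset.mem_sdiff.mpr ⟨hy.1, by simp [hy.2]⟩), hy.1⟩
  have hsplitY : ∑ j ∈ Y, v j = ∑ j ∈ X \ {i}, v j + ∑ j ∈ Y \ X, v j := by
    rw [← hYX, Finset.sum_inter_add_sum_sdiff]
  rw [hsplitX, hsplitY]
  ring

end TopKLemmas2

section Trunc

variable {M K : ℕ} {b i x : Fin M} {S : Finset (Fin M)}

private lemma filter_inter_Iic (hxb : x ≤ b) :
    (S ∩ Finset.Iic b).filter (· < x) = S.filter (· < x) := by
  ext y
  simp only [Finset.mem_filter, Finset.mem_inter, Finset.mem_Iic]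
  constructor
  · rintro ⟨⟨h1, _⟩, h3⟩; exact ⟨h1, h3⟩
  · rintro ⟨h1, h3⟩; exact ⟨⟨h1, le_of_lt (lt_of_lt_of_le h3 hxb)⟩, h3⟩

lemma topK_inter_Iic (hcard : K ≤ (S ∩ Finset.Iic b).card) :
    topK K (S ∩ Finset.Iic b) = topK K S := by
  ext x
  rw [mem_topK, mem_topK]
  constructor
  · rintro ⟨hx1, hx2⟩
    have hxb : x ≤ b := Finset.mem_Iic.mp (Finset.mem_inter.mp hx1).2
    rw [filter_inter_Iic hxb] at hx2
    exact ⟨(Finset.mem_inter.mp hx1).1, hx2⟩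
  · rintro ⟨hx1, hx2⟩
    have hxb : x ≤ b := by
      by_contra hbx
      push_neg at hbx
      have hsub : S ∩ Finset.Iic b ⊆ S.filter (· < x) := by
        intro y hy
        rw [Finset.mem_inter, Finset.mem_Iic] at hy
        exact Finset.mem_filter.mpr ⟨hy.1, lt_of_le_of_lt hy.2 hbx⟩
      have := Finset.card_le_card hsub
      omega
    rw [filter_inter_Iic hxb]
    exact ⟨Finset.mem_inter.mpr ⟨hx1, Finset.mem_Iic.mpr hxb⟩, hx2⟩

private lemma insert_inter_Iic (hib : i ≤ b) :
    insert i (S ∩ Finset.Iic b) = (insert i S) ∩ Finset.Iic b := by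
  ext y
  simp only [Finset.mem_insert, Finset.mem_inter, Finset.mem_Iic]
  constructor
  · rintro (rfl | ⟨h1, h2⟩)
    · exact ⟨Or.inl rfl, hib⟩
    · exact ⟨Or.inr h1, h2⟩
  · rintro ⟨(rfl | h1), h2⟩
    · exact Or.inl rfl
    · exact Or.inr ⟨h1, h2⟩

lemma diff_eq_of_card_ge (v : Fin M → ℝ) (hib : i ≤ b)
    (hcard : K ≤ (S ∩ Finset.Iic b).card) :
    (∑ j ∈ topK K (insert i (S ∩ Finset.Iic b)), v j) - ∑ j ∈ topK K (S ∩ Finset.Iic b), v j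
      = (∑ j ∈ topK K (insert i S), v j) - ∑ j ∈ topK K S, v j := by
  have h1 : topK K (S ∩ Finset.Iic b) = topK K S := topK_inter_Iic hcard
  have hc2 : K ≤ ((insert i S) ∩ Finset.Iic b).card := by
    refine hcard.trans (Finset.card_le_card ?_)
    exact Finset.inter_subset_inter (Finset.subset_insert i S) (Finset.Subset.refl _)
  have h2 : topK K (insert i (S ∩ Finset.Iic b)) = topK K (insert i S) := by
    rw [insert_inter_Iic hib, topK_inter_Iic hc2]
  rw [h1, h2]

lemma diff_abs_le (v : Fin M → ℝ) (hv : ∀ j, 0 ≤ v j ∧ v j ≤ 1)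
    (hib : i ≤ b) (hiS : i ∉ S) :
    |((∑ j ∈ topK K (insert i (S ∩ Finset.Iic b)), v j) - ∑ j ∈ topK K (S ∩ Finset.Iic b), v j)
      - ((∑ j ∈ topK K (insert i S), v j) - ∑ j ∈ topK K S, v j)| ≤ 1 := by
  set T := S ∩ Finset.Iic b with hT
  have hiT : i ∉ T := fun h => hiS (Finset.mem_inter.mp h).1
  have hfilt : T.filter (· < i) = S.filter (· < i) := filter_inter_Iic hib
  by_cases hn : (S.filter (· < i)).card < K
  · have hnT : (T.filter (· < i)).card < K := by rw [hfilt]; exact hn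
    rw [sum_topK_insert_sub v hiT hnT, sum_topK_insert_sub v hiS hn]
    have hbound : ∀ (W : Finset (Fin M)), W.card ≤ 1 →
        0 ≤ ∑ j ∈ W, v j ∧ ∑ j ∈ W, v j ≤ 1 := by
      intro W hW
      constructor
      · exact Finset.sum_nonneg fun j _ => (hv j).1
      · calc ∑ j ∈ W, v j ≤ ∑ _j ∈ W, (1:ℝ) := Finset.sum_le_sum fun j _ => (hv j).2
          _ = W.card := by simp
          _ ≤ 1 := by exact_mod_cast hW
    obtain ⟨h1, h2⟩ := hbound _ (card_topK_sdiff_le_one (K := K) hiT)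
    obtain ⟨h3, h4⟩ := hbound _ (card_topK_sdiff_le_one (K := K) hiS)
    rw [abs_le]
    constructor <;> [linarith; linarith]
  · push_neg at hn
    have hnT : K ≤ (T.filter (· < i)).card := by rw [hfilt]; exact hn
    rw [topK_insert_of_ge hiT hnT, topK_insert_of_ge hiS hn]
    simp

end Trunc

private lemma analytic_bound (K : ℕ) (hK : 2 ≤ K) (lam ε : ℝ)
    (hlam0 : 0 < lam) (hlam1 : lam ≤ 1) (hε0 : 0 < ε) (hε1 : ε < 1) (n : ℕ)
    (hn : (4 / lam) * Real.log (1 / ε) + (2 * (K : ℝ) - 2) / lam < (n : ℝ) + 1) :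
    (2:ℝ) ^ (K - 1) / K * (1 - lam / 2) ^ n ≤ ε := by
  have hK0 : (0:ℝ) < K := by positivity
  have hK2 : (2:ℝ) ≤ K := by exact_mod_cast hK
  set L := Real.log (1 / ε) with hL
  have hLpos : 0 < L := Real.log_pos (by rw [one_div]; exact one_lt_inv_iff₀.mpr ⟨hε0, hε1⟩)
  have hKm1 : ((K - 1 : ℕ) : ℝ) = (K : ℝ) - 1 := by
    have : 1 ≤ K := by omega
    push_cast [Nat.cast_sub this]
    ring
  -- bound powers by exponentials
  have hfac : (0:ℝ) ≤ 1 - lam / 2 := by linarith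
  have h1 : (1 - lam / 2 : ℝ) ≤ Real.exp (-(lam / 2)) := by
    have := Real.add_one_le_exp (-(lam / 2))
    linarith
  have h2 : (1 - lam / 2 : ℝ) ^ n ≤ Real.exp (-(lam / 2)) ^ n :=
    pow_le_pow_left₀ hfac h1 n
  have h2' : Real.exp (-(lam / 2)) ^ n = Real.exp (-(n * (lam / 2))) := by
    rw [← Real.exp_nat_mul]
    ring_nf
  have h3 : (2:ℝ) ^ (K - 1) = Real.exp (((K:ℝ) - 1) * Real.log 2) := by
    rw [← Real.exp_log (by norm_num : (0:ℝ) < 2), ← Real.exp_nat_mul,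
      Real.log_exp, hKm1]
  -- key exponent inequality
  have hlog2 : Real.log 2 ≤ 1 := by
    have := Real.log_le_sub_one_of_pos (by norm_num : (0:ℝ) < 2)
    linarith
  have hlog2K : Real.log 2 ≤ Real.log K := Real.log_le_log (by norm_num) hK2
  have hlogeps : Real.log ε = -L := by
    rw [hL, one_div, Real.log_inv, neg_neg]
  have hnl : 2 * L + ((K:ℝ) - 1) - lam / 2 < (n:ℝ) * (lam / 2) := by
    have hmul := (mul_lt_mul_iff_right₀ hlam0).mpr hn
    rw [mul_add] at hmul
    have e1 : lam * ((4 / lam) * L) = 4 * L := by field_simp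
    have e2 : lam * ((2 * (K : ℝ) - 2) / lam) = 2 * (K:ℝ) - 2 := by field_simp
    rw [e1, e2] at hmul
    nlinarith
  have hexp : ((K:ℝ) - 1) * Real.log 2 + (-(n * (lam / 2))) ≤ Real.log K + Real.log ε := by
    rw [hlogeps]
    have hprod : ((K:ℝ) - 1 - 1) * (1 - Real.log 2) ≥ 0 := by
      apply mul_nonneg <;> linarith
    nlinarith
  -- combine
  have hchain : (2:ℝ) ^ (K - 1) * (1 - lam / 2) ^ n ≤ (K:ℝ) * ε := by
    calc (2:ℝ) ^ (K - 1) * (1 - lam / 2) ^ n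
        ≤ Real.exp (((K:ℝ) - 1) * Real.log 2) * Real.exp (-(n * (lam / 2))) := by
          rw [h3]
          exact mul_le_mul_of_nonneg_left (h2.trans_eq h2') (Real.exp_nonneg _)
      _ = Real.exp (((K:ℝ) - 1) * Real.log 2 + (-(n * (lam / 2)))) := (Real.exp_add _ _).symm
      _ ≤ Real.exp (Real.log K + Real.log ε) := Real.exp_le_exp.mpr hexp
      _ = (K:ℝ) * ε := by rw [Real.exp_add, Real.exp_log hK0, Real.exp_log hε0]
  rw [div_mul_eq_mul_div, div_le_iff₀ hK0]
  linarith [hchain]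

private lemma stepA {M : ℕ} (i b : Fin M) (hib : i ≤ b) (w : Fin M → ℝ)
    (F : Finset (Fin M) → ℝ) :
    ∑ S' ∈ ({i}ᶜ : Finset (Fin M)).powerset,
        F (S' ∩ Finset.Iic b) * (∏ j ∈ S', w j) * ∏ j ∈ (S' ∪ {i})ᶜ, (1 - w j)
      = ∑ S ∈ ((Finset.Iic b) \ {i}).powerset,
          F S * (∏ j ∈ S, w j) * ∏ j ∈ (Finset.Iic b) \ (S ∪ {i}), (1 - w j) := by
  classical
  set D : Finset (Fin M) := Finset.Iic b \ {i} with hD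
  set C : Finset (Fin M) := (Finset.Iic b)ᶜ with hC
  have hiIic : i ∈ Finset.Iic b := Finset.mem_Iic.mpr hib
  have hmemD : ∀ x : Fin M, x ∈ D ↔ (x ≤ b ∧ x ≠ i) := by
    intro x; simp [hD, Finset.mem_sdiff, Finset.mem_Iic]
  have hmemC : ∀ x : Fin M, x ∈ C ↔ ¬ (x ≤ b) := by
    intro x; simp [hC, Finset.mem_Iic]
  have hdisjDC : Disjoint D C := by
    rw [Finset.disjoint_left]
    intro x hxD hxC
    exact (hmemC x).mp hxC ((hmemD x).mp hxD).1
  have hrecomb : ∀ S' : Finset (Fin M), S' ⊆ ({i}ᶜ : Finset (Fin M)) →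
      (S' ∩ D) ∪ (S' ∩ C) = S' := by
    intro S' hS'
    rw [← Finset.inter_union_distrib_left, Finset.inter_eq_left]
    intro x hx
    have hxi : x ≠ i := by
      have := hS' hx
      rw [Finset.mem_compl, Finset.mem_singleton] at this
      exact this
    rw [Finset.mem_union, hmemD, hmemC]
    by_cases hxb : x ≤ b
    · exact Or.inl ⟨hxb, hxi⟩
    · exact Or.inr hxb
  -- the bijection between subsets of {i}ᶜ and pairs
  have hstep1 : ∑ S' ∈ ({i}ᶜ : Finset (Fin M)).powerset,
      F (S' ∩ Finset.Iic b) * (∏ j ∈ S', w j) * ∏ j ∈ (S' ∪ {i})ᶜ, (1 - w j)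
      = ∑ p ∈ D.powerset ×ˢ C.powerset,
          F ((p.1 ∪ p.2) ∩ Finset.Iic b) * (∏ j ∈ p.1 ∪ p.2, w j)
            * ∏ j ∈ ((p.1 ∪ p.2) ∪ {i})ᶜ, (1 - w j) := by
    apply Finset.sum_nbij' (fun S' => (S' ∩ D, S' ∩ C)) (fun p => p.1 ∪ p.2)
    · intro S' hS'
      rw [Finset.mem_product]
      exact ⟨Finset.mem_powerset.mpr Finset.inter_subset_right,
             Finset.mem_powerset.mpr Finset.inter_subset_right⟩
    · intro p hp
      rw [Finset.mem_product] at hp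
      rw [Finset.mem_powerset]
      intro x hx
      rw [Finset.mem_compl, Finset.mem_singleton]
      rcases Finset.mem_union.mp hx with h | h
      · exact ((hmemD x).mp (Finset.mem_powerset.mp hp.1 h)).2
      · intro hxi
        exact (hmemC x).mp (Finset.mem_powerset.mp hp.2 h) (hxi ▸ hib)
    · intro S' hS'
      exact hrecomb S' (Finset.mem_powerset.mp hS')
    · intro p hp
      rw [Finset.mem_product, Finset.mem_powerset, Finset.mem_powerset] at hp
      obtain ⟨h1, h2⟩ := hp
      have e1 : (p.1 ∪ p.2) ∩ D = p.1 := by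
        ext x
        simp only [Finset.mem_inter, Finset.mem_union]
        constructor
        · rintro ⟨h | h, hxD⟩
          · exact h
          · exact absurd ((hmemD x).mp hxD).1 ((hmemC x).mp (h2 h))
        · intro h
          exact ⟨Or.inl h, h1 h⟩
      have e2 : (p.1 ∪ p.2) ∩ C = p.2 := by
        ext x
        simp only [Finset.mem_inter, Finset.mem_union]
        constructor
        · rintro ⟨h | h, hxC⟩
          · exact absurd ((hmemD x).mp (h1 h)).1 ((hmemC x).mp hxC)
          · exact h
        · intro h
          exact ⟨Or.inr h, h2 h⟩
      rw [Prod.ext_iff]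
      exact ⟨e1, e2⟩
    · intro S' hS'
      rw [hrecomb S' (Finset.mem_powerset.mp hS')]
  rw [hstep1, Finset.sum_product]
  apply Finset.sum_congr rfl
  intro S hS
  rw [Finset.mem_powerset] at hS
  have hSb : ∀ x ∈ S, x ≤ b := fun x hx => ((hmemD x).mp (hS hx)).1
  have hinner : ∀ T ∈ C.powerset,
      F ((S ∪ T) ∩ Finset.Iic b) * (∏ j ∈ S ∪ T, w j) * ∏ j ∈ ((S ∪ T) ∪ {i})ᶜ, (1 - w j)
      = (F S * (∏ j ∈ S, w j) * ∏ j ∈ (Finset.Iic b) \ (S ∪ {i}), (1 - w j))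
          * ((∏ j ∈ T, w j) * ∏ j ∈ C \ T, (1 - w j)) := by
    intro T hT
    rw [Finset.mem_powerset] at hT
    have hTb : ∀ x ∈ T, ¬ x ≤ b := fun x hx => (hmemC x).mp (hT hx)
    have hdisjST : Disjoint S T := by
      rw [Finset.disjoint_left]
      intro x hxS hxT
      exact hTb x hxT (hSb x hxS)
    have hIic : (S ∪ T) ∩ Finset.Iic b = S := by
      ext x
      rw [Finset.mem_inter, Finset.mem_union, Finset.mem_Iic]
      constructor
      · rintro ⟨h | h, hxb⟩
        · exact h
        · exact absurd hxb (hTb x h)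
      · intro h
        exact ⟨Or.inl h, hSb x h⟩
    have hcompl : ((S ∪ T) ∪ {i})ᶜ = ((Finset.Iic b) \ (S ∪ {i})) ∪ (C \ T) := by
      ext x
      simp only [Finset.mem_compl, Finset.mem_union, Finset.mem_sdiff, Finset.mem_singleton,
        Finset.mem_Iic, hmemC]
      constructor
      · intro hx
        push_neg at hx
        obtain ⟨⟨hxS, hxT⟩, hxi⟩ := hx
        by_cases hxb : x ≤ b
        · exact Or.inl ⟨hxb, fun h => by rcases h with h | h; exact hxS h; exact hxi h⟩
        · exact Or.inr ⟨hxb, hxT⟩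
      · intro hx
        push_neg
        rcases hx with ⟨hxb, hx2⟩ | ⟨hxb, hxT⟩
        · push_neg at hx2
          exact ⟨⟨hx2.1, fun h => hTb x h hxb⟩, hx2.2⟩
        · exact ⟨⟨fun h => hxb (hSb x h), hxT⟩, fun h => hxb (h ▸ hib)⟩
    have hdisj2 : Disjoint ((Finset.Iic b) \ (S ∪ {i})) (C \ T) := by
      apply Finset.disjoint_of_subset_left (Finset.sdiff_subset)
      apply Finset.disjoint_of_subset_right (Finset.sdiff_subset)
      rw [Finset.disjoint_left]
      intro x hx hxC
      exact (hmemC x).mp hxC (Finset.mem_Iic.mp hx)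
    rw [hIic, Finset.prod_union hdisjST, hcompl, Finset.prod_union hdisj2]
    ring
  rw [Finset.sum_congr rfl hinner, ← Finset.mul_sum]
  have hone : ∑ T ∈ C.powerset, (∏ j ∈ T, w j) * ∏ j ∈ C \ T, (1 - w j) = 1 := by
    rw [← Finset.prod_add]
    apply Finset.prod_eq_one
    intro x _
    ring
  rw [hone, mul_one]


/-- If every weight is at least `λ` and the boundary index `b` satisfies
`b + 1 > (4/λ)·log(1/ε) + (2K-2)/λ`, then the gradient computed on the truncated
corpus of the `b` highest-ranked points is an `ε`-approximation of the true gradient. -/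
theorem truncated_gradient_eps_approx (M K : ℕ) (hK : 2 ≤ K) (lam ε : ℝ)
    (hlam0 : 0 < lam) (hlam1 : lam ≤ 1) (hε0 : 0 < ε) (hε1 : ε < 1)
    (w v : Fin M → ℝ)
    (hw : ∀ j, lam ≤ w j ∧ w j ≤ 1) (hv : ∀ j, 0 ≤ v j ∧ v j ≤ 1)
    (i b : Fin M) (hib : i ≤ b)
    (hb : (4 / lam) * Real.log (1 / ε) + (2 * (K : ℝ) - 2) / lam < ((b : ℕ) : ℝ) + 1)
    (U : Finset (Fin M) → ℝ)
    (hU : ∀ S, U S = (1 / (K : ℝ)) * ∑ j ∈ topK K S, v j) :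
    |(∑ S ∈ ((Finset.Iic b) \ {i}).powerset,
        (U (S ∪ {i}) - U S) * (∏ j ∈ S, w j) * ∏ j ∈ (Finset.Iic b) \ (S ∪ {i}), (1 - w j))
      - ∑ S ∈ ({i}ᶜ : Finset (Fin M)).powerset,
          (U (S ∪ {i}) - U S) * (∏ j ∈ S, w j) * ∏ j ∈ (S ∪ {i})ᶜ, (1 - w j)|
    ≤ ε := by
  classical
  have hKR : (2:ℝ) ≤ (K:ℝ) := by exact_mod_cast hK
  have hK0 : (0:ℝ) < K := by linarith
  set D : Finset (Fin M) := Finset.Iic b \ {i} with hD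
  set A : Finset (Fin M) := ({i}ᶜ : Finset (Fin M)) with hA
  set g : Fin M → ℝ := fun j => if j ∈ D then (1/2 : ℝ) else 1 with hg
  have hw0 : ∀ j, 0 ≤ w j := fun j => le_trans (le_of_lt hlam0) (hw j).1
  have hus : ∀ (X : Finset (Fin M)), X ∪ {i} = insert i X := fun X => by
    rw [Finset.union_comm, ← Finset.insert_eq]
  -- rewrite truncated sum via stepA
  have hstep := stepA i b hib w (fun X => U (X ∪ {i}) - U X)
  rw [← hD, ← hA] at hstep
  rw [← hstep]
  -- pointwise bound
  have hpoint : ∀ S' ∈ A.powerset,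
      |U ((S' ∩ Finset.Iic b) ∪ {i}) - U (S' ∩ Finset.Iic b) - (U (S' ∪ {i}) - U S')|
        ≤ (2:ℝ)^(K-1) / K * ∏ j ∈ S', g j := by
    intro S' hS'
    rw [Finset.mem_powerset] at hS'
    have hiS' : i ∉ S' := fun h => by
      have := hS' h
      rw [hA, Finset.mem_compl, Finset.mem_singleton] at this
      exact this rfl
    have hiT : i ∉ S' ∩ Finset.Iic b := fun h => hiS' (Finset.mem_inter.mp h).1
    have hgprod : ∏ j ∈ S', g j = (1/2 : ℝ) ^ (S' ∩ D).card := by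
      rw [hg]
      rw [Finset.prod_ite_mem S' D (fun _ => (1/2:ℝ)), Finset.prod_const]
    have hDint : S' ∩ D = S' ∩ Finset.Iic b := by
      ext x
      simp only [hD, Finset.mem_inter, Finset.mem_sdiff, Finset.mem_singleton]
      constructor
      · rintro ⟨h1, h2, _⟩; exact ⟨h1, h2⟩
      · rintro ⟨h1, h2⟩; exact ⟨h1, h2, fun h => hiS' (h ▸ h1)⟩
    have hre : U ((S' ∩ Finset.Iic b) ∪ {i}) - U (S' ∩ Finset.Iic b) - (U (S' ∪ {i}) - U S')
        = (1/(K:ℝ)) * (((∑ j ∈ topK K (insert i (S' ∩ Finset.Iic b)), v j)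
            - ∑ j ∈ topK K (S' ∩ Finset.Iic b), v j)
          - ((∑ j ∈ topK K (insert i S'), v j) - ∑ j ∈ topK K S', v j)) := by
      rw [hU, hU, hU, hU, hus, hus]
      ring
    by_cases hcard : K ≤ (S' ∩ Finset.Iic b).card
    · rw [hre, diff_eq_of_card_ge v hib hcard]
      simp only [sub_self, mul_zero, abs_zero]
      rw [hgprod]
      positivity
    · push_neg at hcard
      have hm : (S' ∩ D).card ≤ K - 1 := by
        rw [hDint]; omega
      have hRHS : (1:ℝ)/K ≤ (2:ℝ)^(K-1) / K * ∏ j ∈ S', g j := by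
        rw [hgprod]
        have hpow : ((1:ℝ)/2) ^ (K-1) ≤ ((1:ℝ)/2) ^ (S' ∩ D).card :=
          pow_le_pow_of_le_one (by norm_num) (by norm_num) hm
        have h2K : (0:ℝ) < (2:ℝ)^(K-1) := by positivity
        have key : (2:ℝ)^(K-1) * ((1:ℝ)/2)^(K-1) = 1 := by
          rw [← mul_pow]; norm_num
        calc (1:ℝ)/K = ((2:ℝ)^(K-1) * ((1:ℝ)/2)^(K-1)) / K := by rw [key]
          _ = (2:ℝ)^(K-1) / K * ((1:ℝ)/2)^(K-1) := by ring
          _ ≤ (2:ℝ)^(K-1) / K * ((1:ℝ)/2)^(S' ∩ D).card := by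
              apply mul_le_mul_of_nonneg_left hpow
              positivity
      refine le_trans ?_ hRHS
      rw [hre, abs_mul]
      have h1K : |1/(K:ℝ)| = 1/(K:ℝ) := abs_of_pos (by positivity)
      rw [h1K]
      have := diff_abs_le (K := K) (b := b) (i := i) (S := S') v hv hib hiS'
      calc 1/(K:ℝ) * |_| ≤ 1/(K:ℝ) * 1 := by
            exact mul_le_mul_of_nonneg_left this (by positivity)
        _ = 1/(K:ℝ) := mul_one _
  -- final chain
  have hP0 : ∀ S' : Finset (Fin M), 0 ≤ (∏ j ∈ S', w j) * ∏ j ∈ (S' ∪ {i})ᶜ, (1 - w j) := by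
    intro S'
    apply mul_nonneg (Finset.prod_nonneg fun j _ => hw0 j)
    exact Finset.prod_nonneg fun j _ => by linarith [(hw j).2]
  have hAdiff : ∀ S' : Finset (Fin M), S' ⊆ A → A \ S' = (S' ∪ {i})ᶜ := by
    intro S' _
    ext x
    simp only [hA, Finset.mem_sdiff, Finset.mem_compl, Finset.mem_union, Finset.mem_singleton]
    tauto
  have hcardD : D.card = (b : ℕ) := by
    rw [hD, Finset.card_sdiff_of_subset (Finset.singleton_subset_iff.mpr (Finset.mem_Iic.mpr hib)),
      Fin.card_Iic, Finset.card_singleton]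
    omega
  have hAprod : ∏ j ∈ A, (g j * w j + (1 - w j)) ≤ (1 - lam/2) ^ (b : ℕ) := by
    have hDA : D ⊆ A := by
      intro x hx
      rw [hD, Finset.mem_sdiff] at hx
      rw [hA, Finset.mem_compl]
      exact hx.2
    have hprodsub : ∏ j ∈ A, (g j * w j + (1 - w j)) = ∏ j ∈ D, (g j * w j + (1 - w j)) := by
      refine (Finset.prod_subset hDA ?_).symm
      intro x _ hxD
      rw [hg]
      simp only
      rw [if_neg hxD]
      ring
    rw [hprodsub, ← hcardD, ← Finset.prod_const]
    apply Finset.prod_le_prod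
    · intro j hj
      have := (hw j).1
      have := (hw j).2
      rw [hg]
      simp only
      rw [if_pos hj]
      linarith
    · intro j hj
      have := (hw j).1
      rw [hg]
      simp only
      rw [if_pos hj]
      linarith
  rw [← Finset.sum_sub_distrib]
  calc |∑ S' ∈ A.powerset,
          (((U (S' ∩ Finset.Iic b ∪ {i}) - U (S' ∩ Finset.Iic b)) * ∏ j ∈ S', w j) *
              ∏ j ∈ (S' ∪ {i})ᶜ, (1 - w j)
            - ((U (S' ∪ {i}) - U S') * ∏ j ∈ S', w j) * ∏ j ∈ (S' ∪ {i})ᶜ, (1 - w j))|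
      ≤ ∑ S' ∈ A.powerset,
          |((U (S' ∩ Finset.Iic b ∪ {i}) - U (S' ∩ Finset.Iic b)) * ∏ j ∈ S', w j) *
              ∏ j ∈ (S' ∪ {i})ᶜ, (1 - w j)
            - ((U (S' ∪ {i}) - U S') * ∏ j ∈ S', w j) * ∏ j ∈ (S' ∪ {i})ᶜ, (1 - w j)| :=
        Finset.abs_sum_le_sum_abs _ _
    _ ≤ ∑ S' ∈ A.powerset,
          (2:ℝ)^(K-1) / K * ((∏ j ∈ S', (g j * w j)) * ∏ j ∈ A \ S', (1 - w j)) := by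
        apply Finset.sum_le_sum
        intro S' hS'
        have hSA := Finset.mem_powerset.mp hS'
        have e : ((U (S' ∩ Finset.Iic b ∪ {i}) - U (S' ∩ Finset.Iic b)) * ∏ j ∈ S', w j) *
              ∏ j ∈ (S' ∪ {i})ᶜ, (1 - w j)
            - ((U (S' ∪ {i}) - U S') * ∏ j ∈ S', w j) * ∏ j ∈ (S' ∪ {i})ᶜ, (1 - w j)
            = (U (S' ∩ Finset.Iic b ∪ {i}) - U (S' ∩ Finset.Iic b) - (U (S' ∪ {i}) - U S'))
              * ((∏ j ∈ S', w j) * ∏ j ∈ (S' ∪ {i})ᶜ, (1 - w j)) := by ring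
        rw [e, abs_mul, abs_of_nonneg (hP0 S')]
        have hb1 := mul_le_mul_of_nonneg_right (hpoint S' hS') (hP0 S')
        refine hb1.trans (le_of_eq ?_)
        rw [hAdiff S' hSA, Finset.prod_mul_distrib]
        ring
    _ = (2:ℝ)^(K-1) / K * ∏ j ∈ A, (g j * w j + (1 - w j)) := by
        rw [← Finset.mul_sum, Finset.prod_add]
    _ ≤ (2:ℝ)^(K-1) / K * (1 - lam/2) ^ (b : ℕ) := by
        apply mul_le_mul_of_nonneg_left hAprod
        positivity
    _ ≤ ε := analytic_bound K hK lam ε hlam0 hlam1 hε0 hε1 (b : ℕ) hb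
end

section
/- Let M, K ∈ ℕ with K ≥ 1, let w : Fin M → ℝ satisfy 0 ≤ w j ≤ 1 for all j, and fix i ∈ Fin M. Then ∑_{S ⊆ (Fin M) \ {i}, |{j ∈ S : j < i}| ≤ K−1} (∏_{j ∈ S} w j) · (∏_{j ∉ S ∪ {i}} (1 − w j)) = ∑_{T ⊆ {j : j < i}, |T| ≤ K−1} (∏_{t ∈ T} w t) · (∏_{t < i, t ∉ T} (1 − w t)). That is, the probability that point i belongs to the K smallest-indexed elements of S ∪ {i} equals the probability that a Poisson-binomial variable with success probabilities w_1, …, w_{i−1} is at most K−1. -/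
/-!
Sampling each `j ≠ i` independently with probability `w j` is a product measure on subsets of
`{i}ᶜ`, and the event in question depends only on the trace `S ∩ Iio i`. Marginalising out the
coordinates above `i` (each contributes a factor `w j + (1 - w j) = 1`) leaves the law of a
random subset of `Iio i`, whose size is Poisson-binomial.
-/

open Finset

variable {α R : Type*} [DecidableEq α] [CommRing R]

def bernoulliWeight (f : α → R) (s S : Finset α) : R :=
  (∏ j ∈ S, f j) * ∏ j ∈ s \ S, (1 - f j)

lemma bernoulliWeight_insert_of_subset (f : α → R) {s S : Finset α} {b : α} (hb : b ∉ s)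
    (hS : S ⊆ s) : bernoulliWeight f (insert b s) S = bernoulliWeight f s S * (1 - f b) := by
  have hbS : b ∉ S := fun h => hb (hS h)
  rw [bernoulliWeight, bernoulliWeight, insert_sdiff_of_notMem _ hbS,
    prod_insert (fun h => hb (sdiff_subset h))]
  ring

lemma bernoulliWeight_insert_insert (f : α → R) {s S : Finset α} {b : α} (hb : b ∉ s)
    (hS : S ⊆ s) :
    bernoulliWeight f (insert b s) (insert b S) = f b * bernoulliWeight f s S := by
  rw [bernoulliWeight, bernoulliWeight, insert_sdiff_insert, sdiff_insert_of_notMem hb,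
    prod_insert (fun h => hb (hS h))]
  ring

lemma sum_bernoulliWeight_union_filter_inter (f : α → R) (P : Finset α → Prop) [DecidablePred P]
    {A B : Finset α} (hAB : Disjoint A B) :
    ∑ S ∈ (A ∪ B).powerset with P (S ∩ A), bernoulliWeight f (A ∪ B) S
      = ∑ T ∈ A.powerset with P T, bernoulliWeight f A T := by
  induction B using Finset.induction_on with
  | empty =>
    rw [union_empty]
    exact sum_congr (filter_congr fun S hS => by rw [inter_eq_left.2 (mem_powerset.1 hS)])
      fun _ _ => rfl
  | insert b B hbB ih =>
    have hbA : b ∉ A := disjoint_insert_right.1 hAB |>.1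
    have hb : b ∉ A ∪ B := by simp [hbA, hbB]
    rw [← ih (disjoint_insert_right.1 hAB).2, sum_filter, sum_filter, union_insert,
      sum_powerset_insert hb, ← sum_add_distrib]
    refine sum_congr rfl fun S hS => ?_
    have hSs := mem_powerset.1 hS
    rw [insert_inter_of_notMem hbA, bernoulliWeight_insert_of_subset f hb hSs,
      bernoulliWeight_insert_insert f hb hSs]
    split_ifs <;> ring

lemma sum_bernoulliWeight_filter_inter_of_subset (f : α → R) (P : Finset α → Prop)
    [DecidablePred P] {A s : Finset α} (hAs : A ⊆ s) :
    ∑ S ∈ s.powerset with P (S ∩ A), bernoulliWeight f s S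
      = ∑ T ∈ A.powerset with P T, bernoulliWeight f A T := by
  rw [← union_sdiff_of_subset hAs]
  exact sum_bernoulliWeight_union_filter_inter f P disjoint_sdiff

theorem topK_prob_eq_poisson_binomial_tail_general (M K : ℕ) (w : Fin M → ℝ) (i : Fin M) :
    (∑ S ∈ ({i}ᶜ : Finset (Fin M)).powerset.filter
          (fun S => (S.filter (· < i)).card ≤ K - 1),
        (∏ j ∈ S, w j) * ∏ j ∈ (S ∪ {i})ᶜ, (1 - w j))
      = ∑ T ∈ (Finset.Iio i).powerset.filter (fun T => T.card ≤ K - 1),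
          (∏ t ∈ T, w t) * ∏ t ∈ (Finset.Iio i) \ T, (1 - w t) := by
  have hIio : Iio i ⊆ {i}ᶜ := fun j hj => by simpa using (mem_Iio.1 hj).ne
  calc _ = ∑ S ∈ ({i}ᶜ : Finset (Fin M)).powerset with #(S ∩ Iio i) ≤ K - 1,
          bernoulliWeight w {i}ᶜ S := by
        refine sum_congr (filter_congr fun S _ => ?_) fun S _ => ?_
        · rw [← filter_mem_eq_inter, filter_congr fun j _ => mem_Iio]
        · rw [bernoulliWeight, compl_union, inter_comm, ← sdiff_eq_inter_compl]
    _ = _ := sum_bernoulliWeight_filter_inter_of_subset w (#· ≤ K - 1) hIio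

/-- The probability that point `i` belongs to the `K` smallest-indexed elements of
`S ∪ {i}` equals the lower-tail probability at level `K-1` of a Poisson-binomial
variable with success probabilities `w_1, …, w_{i-1}`. -/
theorem topK_prob_eq_poisson_binomial_tail (M K : ℕ) (hK : 1 ≤ K) (w : Fin M → ℝ)
    (hw : ∀ j, 0 ≤ w j ∧ w j ≤ 1) (i : Fin M) :
    (∑ S ∈ ({i}ᶜ : Finset (Fin M)).powerset.filter
          (fun S => (S.filter (· < i)).card ≤ K - 1),
        (∏ j ∈ S, w j) * ∏ j ∈ (S ∪ {i})ᶜ, (1 - w j))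
      = ∑ T ∈ (Finset.Iio i).powerset.filter (fun T => T.card ≤ K - 1),
          (∏ t ∈ T, w t) * ∏ t ∈ (Finset.Iio i) \ T, (1 - w t) :=
  topK_prob_eq_poisson_binomial_tail_general M K w i
end

section
/- Let M, K ∈ ℕ with K ≥ 1, let w : Fin M → ℝ satisfy 0 ≤ w j ≤ 1 for all j, and fix b ∈ Fin M. Then ∑_{S ⊆ Fin M, ∃ j ∈ top_K(S) with j > b} (∏_{j ∈ S} w j) · (∏_{j ∉ S} (1 − w j)) ≤ ∑_{T ⊆ {j : j ≤ b}, |T| ≤ K−1} (∏_{t ∈ T} w t) · (∏_{t ≤ b, t ∉ T} (1 − w t)). That is, the probability that some point ranked below the boundary point b appears among the K highest-ranked sampled points is at most the probability that at most K−1 of the first b points are sampled. -/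
/-- The probability that some point ranked below the boundary point `b` appears among
the `K` highest-ranked sampled points is at most the probability that at most `K-1` of
the first `b` points are sampled. -/
theorem below_boundary_in_topK_prob_le (M K : ℕ) (hK : 1 ≤ K) (w : Fin M → ℝ)
    (hw : ∀ j, 0 ≤ w j ∧ w j ≤ 1) (b : Fin M) :
    (∑ S ∈ Finset.univ.filter (fun S : Finset (Fin M) => ∃ j ∈ topK K S, b < j),
        (∏ j ∈ S, w j) * ∏ j ∈ Sᶜ, (1 - w j))
      ≤ ∑ T ∈ (Finset.Iic b).powerset.filter (fun T => T.card ≤ K - 1),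
          (∏ t ∈ T, w t) * ∏ t ∈ (Finset.Iic b) \ T, (1 - w t) := by
  classical
  set A : Finset (Fin M) := Finset.Iic b with hA
  set P : Finset (Fin M) → ℝ := fun S => (∏ j ∈ S, w j) * ∏ j ∈ Sᶜ, (1 - w j) with hPdef
  have hP : ∀ S : Finset (Fin M), 0 ≤ P S := by
    intro S
    apply mul_nonneg
    · exact Finset.prod_nonneg fun i _ => (hw i).1
    · exact Finset.prod_nonneg fun i _ => by linarith [(hw i).2]
  -- key combinatorial lemma
  have key : ∀ S : Finset (Fin M), (∃ j ∈ topK K S, b < j) → (S ∩ A).card ≤ K - 1 := by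
    rintro S ⟨j, hjT, hbj⟩
    have hsorted : (S.sort (· ≤ ·)).Pairwise (· ≤ ·) := Finset.pairwise_sort _ _
    have hsub : ∀ x ∈ S ∩ A, x ∈ topK K S := by
      intro x hx
      have hxS : x ∈ S := (Finset.mem_inter.1 hx).1
      have hxb : x ≤ b := Finset.mem_Iic.1 (Finset.mem_inter.1 hx).2
      have hxj : x < j := lt_of_le_of_lt hxb hbj
      have hxl : x ∈ S.sort (· ≤ ·) := (Finset.mem_sort _).2 hxS
      rw [← List.take_append_drop K (S.sort (· ≤ ·))] at hxl
      rcases List.mem_append.1 hxl with h | h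
      · exact List.mem_toFinset.2 h
      · exfalso
        have : j ≤ x := hsorted.rel_of_mem_take_of_mem_drop (List.mem_toFinset.1 hjT) h
        exact absurd hxj (not_lt.2 this)
    have hjA : j ∉ S ∩ A := by
      intro h
      exact absurd (Finset.mem_Iic.1 (Finset.mem_inter.1 h).2) (not_le.2 hbj)
    have hins : insert j (S ∩ A) ⊆ topK K S := by
      intro x hx
      rcases Finset.mem_insert.1 hx with rfl | hx
      · exact hjT
      · exact hsub x hx
    have hcard : (topK K S).card ≤ K := by
      calc (topK K S).card ≤ ((S.sort (· ≤ ·)).take K).length := List.toFinset_card_le _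
        _ ≤ K := by simpa using List.length_take_le K _
    have := Finset.card_le_card hins
    rw [Finset.card_insert_of_notMem hjA] at this
    omega
  -- step 1: bound by the sum over all S with few elements below the boundary
  have step1 :
      (∑ S ∈ Finset.univ.filter (fun S : Finset (Fin M) => ∃ j ∈ topK K S, b < j), P S)
        ≤ ∑ S ∈ Finset.univ.filter (fun S : Finset (Fin M) => (S ∩ A).card ≤ K - 1), P S := by
    apply Finset.sum_le_sum_of_subset_of_nonneg
    · intro S hS
      simp only [Finset.mem_filter, Finset.mem_univ, true_and] at hS ⊢
      exact key S hS
    · exact fun S _ _ => hP S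
  -- inner fiber sums
  have inner : ∀ T ∈ A.powerset,
      (∑ S ∈ Finset.univ.filter (fun S : Finset (Fin M) => S ∩ A = T), P S)
        = (∏ t ∈ T, w t) * ∏ t ∈ A \ T, (1 - w t) := by
    intro T hT
    have hTA : T ⊆ A := Finset.mem_powerset.1 hT
    have hbij :
        (∑ S ∈ Finset.univ.filter (fun S : Finset (Fin M) => S ∩ A = T), P S)
          = ∑ U ∈ Aᶜ.powerset, P (T ∪ U) := by
      apply Finset.sum_nbij' (fun S => S \ A) (fun U => T ∪ U)
      · intro S hS
        simp only [Finset.mem_filter, Finset.mem_univ, true_and] at hS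
        simp only [Finset.mem_powerset]
        intro x hx
        simp only [Finset.mem_sdiff] at hx
        simpa using hx.2
      · intro U hU
        simp only [Finset.mem_powerset] at hU
        simp only [Finset.mem_filter, Finset.mem_univ, true_and]
        ext x
        simp only [Finset.mem_inter, Finset.mem_union]
        constructor
        · rintro ⟨hx1 | hx1, hx2⟩
          · exact hx1
          · exact absurd hx2 (by simpa using hU hx1)
        · exact fun hx => ⟨Or.inl hx, hTA hx⟩
      · intro S hS
        simp only [Finset.mem_filter, Finset.mem_univ, true_and] at hS
        ext x
        simp only [Finset.mem_union, Finset.mem_sdiff]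
        constructor
        · rintro (hx | hx)
          · exact (Finset.mem_inter.1 (hS ▸ hx : x ∈ S ∩ A)).1
          · exact hx.1
        · intro hx
          by_cases hxA : x ∈ A
          · exact Or.inl (hS ▸ Finset.mem_inter.2 ⟨hx, hxA⟩)
          · exact Or.inr ⟨hx, hxA⟩
      · intro U hU
        simp only [Finset.mem_powerset] at hU
        ext x
        simp only [Finset.mem_sdiff, Finset.mem_union]
        constructor
        · rintro ⟨hx | hx, hx2⟩
          · exact absurd (hTA hx) hx2
          · exact hx
        · intro hx
          exact ⟨Or.inr hx, by simpa using hU hx⟩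
      · intro S hS
        simp only [Finset.mem_filter, Finset.mem_univ, true_and] at hS
        congr 1
        ext x
        simp only [Finset.mem_union, Finset.mem_sdiff]
        constructor
        · intro hx
          by_cases hxA : x ∈ A
          · exact Or.inl (hS ▸ Finset.mem_inter.2 ⟨hx, hxA⟩)
          · exact Or.inr ⟨hx, hxA⟩
        · rintro (hx | hx)
          · exact (Finset.mem_inter.1 (hS ▸ hx : x ∈ S ∩ A)).1
          · exact hx.1
    rw [hbij]
    have hPTU : ∀ U ∈ Aᶜ.powerset,
        P (T ∪ U) = ((∏ t ∈ T, w t) * ∏ t ∈ A \ T, (1 - w t)) *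
          ((∏ t ∈ U, w t) * ∏ t ∈ Aᶜ \ U, (1 - w t)) := by
      intro U hU
      have hUA : U ⊆ Aᶜ := Finset.mem_powerset.1 hU
      have hdisj : Disjoint T U :=
        Finset.disjoint_left.2 fun x hxT hxU => by
          exact absurd (hTA hxT) (by simpa using hUA hxU)
      have hcompl : (T ∪ U)ᶜ = (A \ T) ∪ (Aᶜ \ U) := by
        ext x
        by_cases hxA : x ∈ A
        · have hxU : x ∉ U := fun h => (Finset.mem_compl.1 (hUA h)) hxA
          simp [Finset.mem_compl, hxA, hxU]
        · have hxT : x ∉ T := fun h => hxA (hTA h)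
          simp [Finset.mem_compl, hxA, hxT]
      have hdisj2 : Disjoint (A \ T) (Aᶜ \ U) :=
        Finset.disjoint_left.2 fun x hx1 hx2 => by
          have := (Finset.mem_sdiff.1 hx1).1
          have := (Finset.mem_sdiff.1 hx2).1
          simp_all
      simp only [hPdef]
      rw [Finset.prod_union hdisj, hcompl, Finset.prod_union hdisj2]
      ring
    rw [Finset.sum_congr rfl hPTU, ← Finset.mul_sum]
    have hone : (∑ U ∈ Aᶜ.powerset, (∏ t ∈ U, w t) * ∏ t ∈ Aᶜ \ U, (1 - w t)) = 1 := by
      rw [← Finset.prod_add]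
      simp
    rw [hone, mul_one]
  -- step 2: fiberwise decomposition
  have step2 :
      (∑ S ∈ Finset.univ.filter (fun S : Finset (Fin M) => (S ∩ A).card ≤ K - 1), P S)
        = ∑ T ∈ A.powerset.filter (fun T => T.card ≤ K - 1),
            ∑ S ∈ Finset.univ.filter (fun S : Finset (Fin M) => S ∩ A = T), P S := by
    rw [← Finset.sum_fiberwise_of_maps_to (g := fun S : Finset (Fin M) => S ∩ A)
      (t := A.powerset.filter (fun T => T.card ≤ K - 1)) (fun S hS => by
        simp only [Finset.mem_filter, Finset.mem_univ, true_and] at hS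
        simp only [Finset.mem_filter, Finset.mem_powerset]
        exact ⟨Finset.inter_subset_right, hS⟩)]
    apply Finset.sum_congr rfl
    intro T hT
    simp only [Finset.mem_filter, Finset.mem_powerset] at hT
    apply Finset.sum_congr _ fun _ _ => rfl
    ext S
    simp only [Finset.mem_filter, Finset.mem_univ, true_and]
    constructor
    · exact fun h => h.2
    · intro h
      exact ⟨by rw [h]; exact hT.2, h⟩
  calc (∑ S ∈ Finset.univ.filter (fun S : Finset (Fin M) => ∃ j ∈ topK K S, b < j), P S)
      ≤ ∑ S ∈ Finset.univ.filter (fun S : Finset (Fin M) => (S ∩ A).card ≤ K - 1), P S := step1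
    _ = ∑ T ∈ A.powerset.filter (fun T => T.card ≤ K - 1),
          ∑ S ∈ Finset.univ.filter (fun S : Finset (Fin M) => S ∩ A = T), P S := step2
    _ = ∑ T ∈ A.powerset.filter (fun T => T.card ≤ K - 1),
          (∏ t ∈ T, w t) * ∏ t ∈ A \ T, (1 - w t) :=
        Finset.sum_congr rfl fun T hT => inner T (Finset.mem_filter.1 hT).1
end

section
/- Let M, K ∈ ℕ with K ≥ 1, let v : Fin M → ℝ, and let U(S) := (1/K) · ∑_{j ∈ top_K(S)} v j. If S ⊆ (Fin M) \ {i}, |S| ≥ K, and fewer than K elements of S have index smaller than i, then U(S ∪ {i}) − U(S) = (v(i) − v(α_K(S)))/K, where α_K(S) is the K-th smallest index of S. -/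
/-- If `|S| ≥ K` and fewer than `K` elements of `S` have index smaller than `i`, then
adding `i` to `S` changes the additive utility by `(v i - v(α_K(S))) / K`, where
`α_K(S)` is the `K`-th smallest index of `S`. -/
theorem additive_utility_expel (M K : ℕ) (hK : 1 ≤ K) (v : Fin M → ℝ)
    (i : Fin M) (S : Finset (Fin M)) (hiS : i ∉ S) (hcard : K ≤ S.card)
    (hfew : (S.filter (· < i)).card < K) :
    (1 / (K : ℝ)) * ∑ j ∈ topK K (S ∪ {i}), v j
      - (1 / (K : ℝ)) * ∑ j ∈ topK K S, v j
      = (v i - v ((S.sort (· ≤ ·)).get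
          ⟨K - 1, by rw [Finset.length_sort]; omega⟩)) / (K : ℝ) := by
  classical
  set L := S.sort (· ≤ ·) with hLdef
  have hLen : L.length = S.card := Finset.length_sort _
  have hK1 : K - 1 < L.length := by omega
  have hsortL : L.Pairwise (· ≤ ·) := Finset.pairwise_sort _ _
  have hnodupL : L.Nodup := Finset.sort_nodup _ _
  set α : Fin M := L.get ⟨K - 1, hK1⟩ with hα
  have hunion : S ∪ {i} = insert i S := by
    rw [Finset.union_comm, ← Finset.insert_eq]
  -- the sorted list of `S ∪ {i}`
  have hL' : (S ∪ {i}).sort (· ≤ ·) = L.orderedInsert (· ≤ ·) i := by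
    refine List.Perm.eq_of_pairwise' (Finset.pairwise_sort _ _)
      (hsortL.orderedInsert i L) ?_
    have h1 : List.Perm ((S ∪ {i}).sort (· ≤ ·)) (i :: L) := by
      rw [← Multiset.coe_eq_coe, Finset.sort_eq, hunion,
        Finset.insert_val_of_notMem hiS, ← Finset.sort_eq S (· ≤ ·)]
      rfl
    exact h1.trans (List.perm_orderedInsert _ _ _).symm
  rw [List.orderedInsert_eq_take_drop] at hL'
  set A := L.takeWhile (fun b => ¬ i ≤ b) with hA
  set B := L.dropWhile (fun b => ¬ i ≤ b) with hB
  have hAB : A ++ B = L := List.takeWhile_append_dropWhile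
  have hmemA : ∀ x ∈ A, x < i := by
    intro x hx
    have := List.mem_takeWhile_imp hx
    simpa using this
  -- `A` has fewer than `K` elements
  have hp : A.length < K := by
    have hAsub : A.Sublist (L.filter (fun b => decide (b < i))) := by
      have h1 : A.filter (fun b => decide (b < i)) = A :=
        List.filter_eq_self.mpr (fun a ha => by simpa using hmemA a ha)
      have := (List.takeWhile_sublist (fun b => ¬ i ≤ b)).filter
        (fun b => decide (b < i)) (l₂ := L)
      rwa [← hA, h1] at this
    have hcardfil : (L.filter (fun b => decide (b < i))).length
        = (S.filter (· < i)).card := by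
      have hv : (↑L : Multiset (Fin M)) = S.val := Finset.sort_eq _ _
      rw [Finset.card_def, Finset.filter_val, ← hv]
      simp [Multiset.filter_coe]
    have := hAsub.length_le
    omega
  obtain ⟨m, hm⟩ : ∃ m, K = A.length + (m + 1) := ⟨K - A.length - 1, by omega⟩
  have htakeA : L.take A.length = A := by
    rw [← hAB]; exact List.take_left
  have hdropA : L.drop A.length = B := by
    rw [← hAB]; exact List.drop_left
  -- take K of the new sorted list
  have hTakeL' : ((S ∪ {i}).sort (· ≤ ·)).take K = A ++ i :: B.take m := by
    rw [hL', hm, List.take_length_add_append, List.take_succ_cons]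
  -- take (K-1) of L
  have h2 : L.take (A.length + m) = A ++ B.take m := by
    rw [List.take_add, htakeA, hdropA]
  -- take K of L
  have h3 : L.take K = L.take (A.length + m) ++ [α] := by
    have hidx : A.length + m = K - 1 := by omega
    rw [hm, show A.length + (m + 1) = (A.length + m) + 1 from rfl, List.take_succ,
      hidx, List.getElem?_eq_getElem hK1]
    rfl
  set T : Finset (Fin M) := (L.take (A.length + m)).toFinset with hT
  have hT1 : topK K (S ∪ {i}) = insert i T := by
    rw [topK, hTakeL', hT, h2, List.toFinset_append, List.toFinset_cons,
      Finset.union_insert, ← List.toFinset_append]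
  have hT2 : topK K S = insert α T := by
    rw [topK, ← hLdef, h3, List.toFinset_append]
    simp only [List.toFinset_cons, List.toFinset_nil, LawfulSingleton.insert_empty_eq]
    rw [Finset.union_comm, ← Finset.insert_eq]
  have hiT : i ∉ T := by
    intro h
    apply hiS
    have : i ∈ L := (List.take_sublist _ _).subset (List.mem_toFinset.mp h)
    rwa [hLdef, Finset.mem_sort] at this
  have hαT : α ∉ T := by
    have hnd : (L.take K).Nodup := (List.take_sublist _ _).nodup hnodupL
    rw [h3] at hnd
    have := (List.nodup_append'.mp hnd).2.2
    intro h
    exact this (List.mem_toFinset.mp h) (List.mem_singleton_self α)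
  rw [hT1, hT2, Finset.sum_insert hiT, Finset.sum_insert hαT]
  have hKne : (K : ℝ) ≠ 0 := by positivity
  field_simp
  ring
end

section
/- Let M, K ∈ ℕ with K ≥ 1, let w : Fin M → ℝ, and fix i ∈ Fin M. Let L_i := {j : j < i} and R_i := {j : j > i}. Then ∑_{S ⊆ (Fin M) \ {i}, |S| ≤ K−1} (∏_{j ∈ S} w j) · (∏_{j ∉ S ∪ {i}} (1 − w j)) = ∑_{k'=0}^{K−1} ∑_{j=0}^{k'} P_j(L_i) · P_{k'−j}(R_i), where P_k(A) := ∑_{S ⊆ A, |S| = k} (∏_{t ∈ S} w t) · (∏_{t ∈ A \ S} (1 − w t)). -/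
/-!
Including each point `t` independently with probability `w t`, the size distribution on `A` is
read off the generating polynomial `∏_{t ∈ A} (w t X + (1 - w t))`: `P_k(A)` is its coefficient
of `X ^ k`. The generating polynomial of a disjoint union is the product of those of the parts, so
`P_k(A ∪ B)` is the convolution `∑_j P_j(A) P_{k-j}(B)`. Removing `i` leaves the disjoint union
of the points ranked above and below `i`, and summing the convolution over `k < K` gives the
identity.
-/

open Finset Polynomial

/-- `subsetProb w k A` is the probability `P_k(A)` that exactly `k` points of `A` are
sampled when each point `t` is included independently with probability `w t`. -/
def subsetProb {ι : Type*} [DecidableEq ι] (w : ι → ℝ) (k : ℕ) (A : Finset ι) : ℝ :=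
  ∑ S ∈ A.powerset.filter (fun S => S.card = k),
    (∏ t ∈ S, w t) * ∏ t ∈ A \ S, (1 - w t)

section SubsetProb

variable {ι : Type*} [DecidableEq ι] (w : ι → ℝ)

theorem subsetProb_eq_coeff_prod (k : ℕ) (A : Finset ι) :
    subsetProb w k A = (∏ t ∈ A, (C (w t) * X + C (1 - w t))).coeff k := by
  rw [prod_add, finsetSum_coeff, subsetProb, sum_filter]
  refine sum_congr rfl fun S _ => ?_
  rw [prod_mul_distrib, prod_const, ← map_prod, ← map_prod, mul_right_comm, ← C_mul,
    coeff_C_mul_X_pow]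
  exact if_congr eq_comm rfl rfl

theorem subsetProb_union (k : ℕ) {A B : Finset ι} (hAB : Disjoint A B) :
    subsetProb w k (A ∪ B) =
      ∑ j ∈ range (k + 1), subsetProb w j A * subsetProb w (k - j) B := by
  simp only [subsetProb_eq_coeff_prod, prod_union hAB, coeff_mul,
    Nat.sum_antidiagonal_eq_sum_range_succ_mk]

theorem sum_filter_card_le_eq_sum_range_subsetProb (A : Finset ι) (n : ℕ) :
    ∑ S ∈ A.powerset.filter (fun S => S.card ≤ n), (∏ t ∈ S, w t) * ∏ t ∈ A \ S, (1 - w t) =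
      ∑ k ∈ range (n + 1), subsetProb w k A := by
  simp only [subsetProb, sum_filter]
  rw [sum_comm]
  simp

end SubsetProb

theorem compl_singleton_eq_Iio_union_Ioi {α : Type*} [LinearOrder α] [Fintype α]
    [LocallyFiniteOrderTop α] [LocallyFiniteOrderBot α] (a : α) :
    ({a}ᶜ : Finset α) = Iio a ∪ Ioi a := by
  rw [← Ioi_disjUnion_Iio, disjUnion_eq_union, union_comm]

/-- The total probability of sampling fewer than `K` points from the corpus with point
`i` removed decomposes by how many sampled points rank above and below `i`:
it equals `∑_{k'=0}^{K-1} ∑_{j=0}^{k'} P_j(L_i) · P_{k'-j}(R_i)`. -/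
theorem small_subsets_prob_decomposition (M K : ℕ) (hK : 1 ≤ K)
    (w : Fin M → ℝ) (i : Fin M) :
    (∑ S ∈ ({i}ᶜ : Finset (Fin M)).powerset.filter (fun S => S.card ≤ K - 1),
        (∏ j ∈ S, w j) * ∏ j ∈ (S ∪ {i})ᶜ, (1 - w j))
      = ∑ k' ∈ Finset.range K, ∑ j ∈ Finset.range (k' + 1),
          subsetProb w j (Finset.Iio i) * subsetProb w (k' - j) (Finset.Ioi i) := by
  have hcompl (S : Finset (Fin M)) : (S ∪ {i})ᶜ = {i}ᶜ \ S := by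
    rw [compl_union, sdiff_eq_inter_compl, inter_comm]
  simp only [hcompl]
  rw [sum_filter_card_le_eq_sum_range_subsetProb, Nat.sub_add_cancel hK,
    compl_singleton_eq_Iio_union_Ioi]
  exact sum_congr rfl fun k _ => subsetProb_union w k (disjoint_Ioi_Iio i).symm
end
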